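/- arXiv:1510.01484 — 3 statements merged into one kernel-verified Lean document; each statement's English description precedes it below -/
import Mathlib

section
/- For a skew-symmetric Ω corresponding to ω with ω_c = ‖ω‖ ≠ 0 and h ≠ 0, φ₁(hΩ) = I + ((1 − cos(h ω_c))/(h ω_c²)) Ω + ((h ω_c − sin(h ω_c))/(h ω_c³)) Ω². -/
open Matrix
open scoped Nat

/-- The skew-symmetric matrix of the cross product with `ω`: `Ω.mulVec p = p ×₃ ω`. -/
def OmegaMat (ω : Fin 3 → ℝ) : Matrix (Fin 3) (Fin 3) ℝ :=
  !![0, ω 2, -(ω 1); -(ω 2), 0, ω 0; ω 1, -(ω 0), 0]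

/-- The `ℓ`-th `φ` function of a square matrix, via the entire power series
`φ_ℓ(A) = ∑_{j≥0} A^j/(j+ℓ)!`. -/
noncomputable def phiMat {n : Type*} [Fintype n] [DecidableEq n]
    (l : ℕ) (A : Matrix n n ℝ) : Matrix n n ℝ :=
  ∑' j : ℕ, (((j + l)! : ℝ))⁻¹ • A ^ j

/-!
Since `Ω³ = -ω_c² Ω`, every power `(hΩ)^j` with `j ≥ 1` is a scalar multiple of `Ω` or of `Ω²`
according to the parity of `j`. Splitting the series of `φ₁(hΩ)` by parity therefore leaves two
scalar series, which are the tails of the Taylor series of `cos θ` and `sin θ` at `θ = h ω_c`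
divided by `θ²` and `θ³`.
-/

lemma OmegaMat_pow_three (ω : Fin 3 → ℝ) :
    OmegaMat ω ^ 3 = (-((ω 0)^2 + (ω 1)^2 + (ω 2)^2)) • OmegaMat ω := by
  ext i j
  fin_cases i <;> fin_cases j <;>
    simp [OmegaMat, pow_succ, Matrix.mul_apply, Fin.sum_univ_succ] <;> ring

section PowThree

variable {𝕜 R : Type*} [CommSemiring 𝕜] [Semiring R] [Algebra 𝕜 R] {A : R} {s : 𝕜}

lemma pow_two_mul_add_one_of_pow_three_eq_smul (hA : A ^ 3 = s • A) (k : ℕ) :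
    A ^ (2 * k + 1) = s ^ k • A := by
  induction k with
  | zero => simp
  | succ k ih =>
    rw [show 2 * (k + 1) + 1 = 2 * k + 1 + 2 by ring, pow_add, ih, smul_mul_assoc,
      ← pow_succ', hA, smul_smul, ← pow_succ]

lemma pow_two_mul_add_two_of_pow_three_eq_smul (hA : A ^ 3 = s • A) (k : ℕ) :
    A ^ (2 * k + 2) = s ^ k • A ^ 2 := by
  rw [pow_succ, pow_two_mul_add_one_of_pow_three_eq_smul hA, smul_mul_assoc, ← pow_two]

end PowThree

theorem Real.hasSum_one_sub_cos_div_sq {θ : ℝ} (hθ : θ ≠ 0) :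
    HasSum (fun k : ℕ => (-θ ^ 2) ^ k / (2 * k + 2)!) ((1 - cos θ) / θ ^ 2) := by
  have h := ((hasSum_nat_add_iff' 1).mpr (Real.hasSum_cos θ)).neg.div_const (θ ^ 2)
  rw [Finset.sum_range_one, pow_zero, mul_zero, pow_zero, Nat.factorial_zero, Nat.cast_one,
    div_one, one_mul, neg_sub] at h
  refine h.congr_fun fun k => ?_
  rw [neg_pow, ← pow_mul, pow_succ, show 2 * (k + 1) = 2 * k + 2 by ring, pow_add]
  field_simp

theorem Real.hasSum_sub_sin_div_cube {θ : ℝ} (hθ : θ ≠ 0) :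
    HasSum (fun k : ℕ => (-θ ^ 2) ^ k / (2 * k + 3)!) ((θ - sin θ) / θ ^ 3) := by
  have h := ((hasSum_nat_add_iff' 1).mpr (Real.hasSum_sin θ)).neg.div_const (θ ^ 3)
  rw [Finset.sum_range_one, pow_zero, mul_zero, zero_add, pow_one, Nat.factorial_one,
    Nat.cast_one, div_one, one_mul, neg_sub] at h
  refine h.congr_fun fun k => ?_
  rw [neg_pow, ← pow_mul, pow_succ, show 2 * (k + 1) + 1 = 2 * k + 3 by ring, pow_add]
  field_simp

theorem hasSum_phi_one_of_pow_three_eq_smul {R : Type*} [Ring R] [Algebra ℝ R]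
    [TopologicalSpace R] [IsTopologicalAddGroup R] [ContinuousSMul ℝ R]
    {A : R} {θ : ℝ} (hθ : θ ≠ 0) (hA : A ^ 3 = (-θ ^ 2) • A) :
    HasSum (fun j : ℕ => ((j + 1)! : ℝ)⁻¹ • A ^ j)
      (1 + ((1 - Real.cos θ) / θ ^ 2) • A + ((θ - Real.sin θ) / θ ^ 3) • A ^ 2) := by
  have hodd : HasSum (fun k : ℕ => ((2 * k + 1 + 1)! : ℝ)⁻¹ • A ^ (2 * k + 1))
      (((1 - Real.cos θ) / θ ^ 2) • A) := by
    refine ((Real.hasSum_one_sub_cos_div_sq hθ).smul_const A).congr_fun fun k => ?_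
    rw [pow_two_mul_add_one_of_pow_three_eq_smul hA, smul_smul, inv_mul_eq_div]
  have heven : HasSum (fun k : ℕ => ((2 * k + 1 + 1 + 1)! : ℝ)⁻¹ • A ^ (2 * k + 1 + 1))
      (((θ - Real.sin θ) / θ ^ 3) • A ^ 2) := by
    refine ((Real.hasSum_sub_sin_div_cube hθ).smul_const (A ^ 2)).congr_fun fun k => ?_
    rw [pow_two_mul_add_two_of_pow_three_eq_smul hA, smul_smul, inv_mul_eq_div]
  have h := (hasSum_nat_add_iff (f := fun j : ℕ => ((j + 1)! : ℝ)⁻¹ • A ^ j) 1).mp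
    (HasSum.even_add_odd (f := fun j : ℕ => ((j + 1 + 1)! : ℝ)⁻¹ • A ^ (j + 1)) hodd heven)
  rwa [Finset.sum_range_one, zero_add, Nat.factorial_one, Nat.cast_one, inv_one, pow_zero,
    one_smul, add_comm, ← add_assoc] at h

theorem stmt8 (ω : Fin 3 → ℝ) (h : ℝ) (hh : h ≠ 0)
    (ωc : ℝ) (hωc : ωc = Real.sqrt ((ω 0)^2 + (ω 1)^2 + (ω 2)^2)) (hne : ωc ≠ 0) :
    phiMat 1 (h • OmegaMat ω) =
      1 + ((1 - Real.cos (h * ωc)) / (h * ωc ^ 2)) • OmegaMat ω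
        + ((h * ωc - Real.sin (h * ωc)) / (h * ωc ^ 3)) • (OmegaMat ω) ^ 2 := by
  have hωc_sq : ωc ^ 2 = (ω 0)^2 + (ω 1)^2 + (ω 2)^2 := by
    rw [hωc, Real.sq_sqrt (by positivity)]
  have hcube : (h • OmegaMat ω) ^ 3 = (-(h * ωc) ^ 2) • (h • OmegaMat ω) := by
    rw [smul_pow, OmegaMat_pow_three, ← hωc_sq, smul_smul, smul_smul]
    congr 1
    ring
  have hcoef₁ : (1 - Real.cos (h * ωc)) / (h * ωc) ^ 2 * h
      = (1 - Real.cos (h * ωc)) / (h * ωc ^ 2) := by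
    field_simp
  have hcoef₂ : (h * ωc - Real.sin (h * ωc)) / (h * ωc) ^ 3 * h ^ 2
      = (h * ωc - Real.sin (h * ωc)) / (h * ωc ^ 3) := by
    field_simp
  rw [phiMat, (hasSum_phi_one_of_pow_three_eq_smul (mul_ne_zero hh hne) hcube).tsum_eq,
    smul_pow, smul_smul, smul_smul, hcoef₁, hcoef₂]
end

section
/- For skew-symmetric Ω ∈ ℝ^{3×3} corresponding to ω, the Cayley transform satisfies R((h/2)Ω) = (I − (h/2)Ω)^{-1}(I + (h/2)Ω) = I + 2κ((h/2)Ω + (h²/4)Ω²), where κ = (1 + (h²/4)ω_c²)^{-1} and ω_c = ‖ω‖. -/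
open Matrix

set_option maxHeartbeats 2000000

theorem stmt12 (ω : Fin 3 → ℝ) (h : ℝ)
    (ωc κ : ℝ) (hωc : ωc = Real.sqrt ((ω 0)^2 + (ω 1)^2 + (ω 2)^2))
    (hκ : κ = (1 + h ^ 2 / 4 * ωc ^ 2)⁻¹) :
    ((1 : Matrix (Fin 3) (Fin 3) ℝ) - (h / 2) • OmegaMat ω)⁻¹ * (1 + (h / 2) • OmegaMat ω) =
      1 + (2 * κ) • ((h / 2) • OmegaMat ω + (h ^ 2 / 4) • (OmegaMat ω) ^ 2) := by
  have hs : (0:ℝ) ≤ (ω 0)^2 + (ω 1)^2 + (ω 2)^2 := by positivity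
  have hωc2 : ωc ^ 2 = (ω 0)^2 + (ω 1)^2 + (ω 2)^2 := by
    rw [hωc, Real.sq_sqrt hs]
  have hd : (0:ℝ) < 1 + h ^ 2 / 4 * ωc ^ 2 := by
    have : (0:ℝ) ≤ h ^ 2 / 4 * ωc ^ 2 := by positivity
    linarith
  have hκd : κ * (1 + h ^ 2 / 4 * ((ω 0)^2 + (ω 1)^2 + (ω 2)^2)) = 1 := by
    rw [← hωc2, hκ]
    field_simp
  have hdet : ((1 : Matrix (Fin 3) (Fin 3) ℝ) - (h / 2) • OmegaMat ω).det
      = 1 + h ^ 2 / 4 * ωc ^ 2 := by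
    rw [hωc2]
    simp [Matrix.det_fin_three, OmegaMat]
    ring
  have : Invertible ((1 : Matrix (Fin 3) (Fin 3) ℝ) - (h / 2) • OmegaMat ω) := by
    apply Matrix.invertibleOfIsUnitDet
    rw [hdet]
    exact (isUnit_iff_ne_zero).2 (ne_of_gt hd)
  rw [Matrix.inv_mul_eq_iff_eq_mul_of_invertible]
  ext i j
  fin_cases i <;> fin_cases j <;>
    simp [OmegaMat, Matrix.mul_apply, Fin.sum_univ_succ, pow_two, Matrix.one_apply]
  · linear_combination (0:ℝ) * hκd
  · linear_combination (-(h * ω 2)) * hκd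
  · linear_combination (h * ω 1) * hκd
  · linear_combination (h * ω 2) * hκd
  · linear_combination (0:ℝ) * hκd
  · linear_combination (-(h * ω 0)) * hκd
  · linear_combination (-(h * ω 1)) * hκd
  · linear_combination (h * ω 0) * hκd
  · linear_combination (0:ℝ) * hκd
end

section
/- The Boris rotation agrees with the Cayley transform: with t = (h/2)ω, p' = p + p × t, s = 2t/(1+‖t‖²), the vector p + p' × s equals R((h/2)Ω) p, where Ω p = p × ω. -/
open Matrix
open scoped Matrix

/-
Write `t = (h/2) ω`, so that `(h/2) Ω = OmegaMat t` is the matrix of `· ⨯₃ t`. Since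
`det (1 - OmegaMat t) = 1 + ‖t‖² > 0`, the Cayley image `q = (1 - OmegaMat t)⁻¹ (1 + OmegaMat t) p`
is the unique solution of `q - q ⨯₃ t = p + p ⨯₃ t`. For the Boris vector `q = p + p' ⨯₃ s` put
`u = p ⨯₃ t`: then `p' ⨯₃ t = u + u ⨯₃ t` and, as `u ⊥ t`, `u ⨯₃ t ⨯₃ t = -‖t‖² u`, so
`q - q ⨯₃ t = p - u + (2 / (1 + ‖t‖²)) (1 + ‖t‖²) u = p + u`.
-/

theorem OmegaMat_smul (c : ℝ) (ω : Fin 3 → ℝ) : OmegaMat (c • ω) = c • OmegaMat ω := by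
  simp [OmegaMat, smul_of]

theorem OmegaMat_mulVec (ω p : Fin 3 → ℝ) : OmegaMat ω *ᵥ p = p ⨯₃ ω := by
  ext i
  fin_cases i <;> simp [OmegaMat, mulVec, dotProduct, Fin.sum_univ_three, cross_apply] <;> ring

theorem det_one_sub_OmegaMat (ω : Fin 3 → ℝ) : (1 - OmegaMat ω).det = 1 + ω ⬝ᵥ ω := by
  rw [det_fin_three, vec3_dotProduct]
  simp only [OmegaMat, Matrix.sub_apply, one_apply, of_apply, cons_val', cons_val_zero,
    cons_val_one, cons_val, cons_val_fin_one, Fin.reduceEq, ↓reduceIte]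
  ring

theorem one_add_dotProduct_self_pos {n : Type*} [Fintype n] (v : n → ℝ) : 0 < 1 + v ⬝ᵥ v := by
  have : 0 ≤ v ⬝ᵥ v := by simpa using dotProduct_star_self_nonneg v
  linarith

theorem cross_cross_self_cross_self {R : Type*} [CommRing R] (p t : Fin 3 → R) :
    p ⨯₃ t ⨯₃ t ⨯₃ t = -(t ⬝ᵥ t) • (p ⨯₃ t) := by
  rw [cross_cross_eq_smul_sub_smul, dotProduct_comm, dot_cross_self, zero_smul, zero_sub, neg_smul]

theorem boris_sub_cross_eq_add_cross {R : Type*} [CommRing R] {κ : R} (t p : Fin 3 → R)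
    (hκ : κ * (1 + t ⬝ᵥ t) = 2) {q : Fin 3 → R} (hq : q = p + (p + p ⨯₃ t) ⨯₃ (κ • t)) :
    q - q ⨯₃ t = p + p ⨯₃ t := by
  simp only [hq, map_add, map_smul, LinearMap.add_apply, LinearMap.smul_apply,
    cross_cross_self_cross_self]
  linear_combination (norm := module) hκ • (p ⨯₃ t)

/-- The Boris rotation step agrees with the Cayley transform `R((h/2)Ω)`. -/
theorem stmt13 (ω p : Fin 3 → ℝ) (h : ℝ)
    (t s p' : Fin 3 → ℝ)
    (ht : t = (h / 2) • ω)
    (hp' : p' = p + p ⨯₃ t)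
    (hs : s = (2 / (1 + t ⬝ᵥ t)) • t) :
    p + p' ⨯₃ s =
      (((1 : Matrix (Fin 3) (Fin 3) ℝ) - (h / 2) • OmegaMat ω)⁻¹ *
        (1 + (h / 2) • OmegaMat ω)).mulVec p := by
  rw [← OmegaMat_smul, ← ht]
  have hpos := one_add_dotProduct_self_pos t
  have hdet : IsUnit (1 - OmegaMat t).det := by
    rw [det_one_sub_OmegaMat]
    exact hpos.ne'.isUnit
  have := invertibleOfIsUnitDet _ hdet
  rw [← mulVec_mulVec]
  refine (inv_mulVec_eq_vec ?_).symm
  rw [sub_mulVec, add_mulVec, one_mulVec, one_mulVec, OmegaMat_mulVec, OmegaMat_mulVec]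
  exact (boris_sub_cross_eq_add_cross t p (div_mul_cancel₀ 2 hpos.ne') (by rw [hp', hs])).symm
end
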